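/- There is an absolute constant c > 0 such that for every odd prime p, the kernel K : F_p × F_p → ℂ defined by K(x, y) = e_p(−x² · (4y)^{−1}) for y ≠ 0 and K(x, 0) = 0 satisfies Ω ≤ c·p², where Ω = ( Σ_{s,u,v ∈ F_p} | Σ_{x ∈ F_p} K(x, s − x) · conj(K(x + u, s − x)) · conj(K(x, s + v − x)) · K(x + u, s + v − x) |² )^(1/2). -/

import Mathlib

/-!
Substituting `x = s - t`, the four quadratic phases of the inner sum telescope to
`(2xu + u²) v / (4t(t + v))`, so the inner sum becomes `∑ₜ cₜ e_p(αₜ s)` with `|cₜ| ≤ 1` and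
frequency `αₜ = 2uv / (4t(t + v))`. Orthogonality of additive characters bounds
`∑ₛ |∑ₜ cₜ e_p(αₜ s)|²` by `p` times the number of pairs `(t, t')` with `αₜ = αₜ'`. For `u, v ≠ 0`
the frequency depends injectively on `t(t + v)`, so `t ↦ αₜ` is at most two-to-one and the slice
`(u, v)` contributes at most `2p²`; each of the `2p - 1` slices with `uv = 0` contributes at most
`p³`. Hence `Ω² ≤ 4p⁴`.
-/

open Finset

/-- `e_p(x) = exp(2πi x / p)` for `x : ZMod p`. -/
noncomputable def ep (p : ℕ) [NeZero p] (x : ZMod p) : ℂ :=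
  Complex.exp (2 * (Real.pi : ℂ) * Complex.I * (x.val : ℂ) / (p : ℂ))

/-- The quadratic kernel `K(x,y) = e_p(-x²(4y)⁻¹)` for `y ≠ 0`, `0` otherwise. -/
noncomputable def Kq (p : ℕ) [NeZero p] (x y : ZMod p) : ℂ :=
  if y = 0 then 0 else ep p (-(x ^ 2 * (4 * y)⁻¹))

/-- The quantity Ω associated to a kernel K. -/
noncomputable def bigOmega (p : ℕ) [NeZero p] (K : ZMod p → ZMod p → ℂ) : ℝ :=
  (∑ s : ZMod p, ∑ u : ZMod p, ∑ v : ZMod p,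
    ‖∑ x : ZMod p,
      K x (s - x) * star (K (x + u) (s - x)) * star (K x (s + v - x)) *
        K (x + u) (s + v - x)‖ ^ 2) ^ ((1 : ℝ) / 2)

open ComplexConjugate

section CharacterSums

variable {R ι : Type*} [CommRing R] [Fintype R] [DecidableEq R] [Fintype ι]

theorem sum_norm_sq_sum_mul_addChar {ψ : AddChar R ℂ} (hψ : ψ.IsPrimitive) (c : ι → ℂ)
    (α : ι → R) :
    ((∑ s, ‖∑ t, c t * ψ (α t * s)‖ ^ 2 : ℝ) : ℂ) =
      Fintype.card R * ∑ t, ∑ t', if α t = α t' then c t * conj (c t') else 0 := by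
  have hsq (s : R) : (‖∑ t, c t * ψ (α t * s)‖ : ℂ) ^ 2 =
      ∑ t, ∑ t', c t * conj (c t') * ψ (s * (α t - α t')) := by
    rw [← Complex.mul_conj', map_sum, sum_mul_sum]
    refine sum_congr rfl fun t _ => sum_congr rfl fun t' _ => ?_
    rw [map_mul (starRingEnd ℂ), ← AddChar.map_neg_eq_conj,
      show s * (α t - α t') = α t * s + -(α t' * s) by ring, AddChar.map_add_eq_mul]
    ring
  push_cast
  simp_rw [hsq]
  rw [sum_comm, mul_sum]
  refine sum_congr rfl fun t _ => ?_
  rw [sum_comm, mul_sum]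
  refine sum_congr rfl fun t' _ => ?_
  rw [← mul_sum, AddChar.sum_mulShift _ hψ]
  simp only [sub_eq_zero]
  split_ifs <;> simp [mul_comm]

theorem sum_norm_sq_sum_mul_addChar_le {ψ : AddChar R ℂ} (hψ : ψ.IsPrimitive) {c : ι → ℂ}
    (hc : ∀ t, ‖c t‖ ≤ 1) (α : ι → R) :
    ∑ s, ‖∑ t, c t * ψ (α t * s)‖ ^ 2 ≤ Fintype.card R * ∑ t, (#{t' | α t = α t'} : ℝ) := by
  have h := congrArg norm (sum_norm_sq_sum_mul_addChar hψ c α)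
  rw [Complex.norm_real, Real.norm_of_nonneg (by positivity), norm_mul,
    Complex.norm_natCast] at h
  rw [h]
  gcongr
  refine (norm_sum_le _ _).trans (sum_le_sum fun t _ => (norm_sum_le _ _).trans ?_)
  rw [natCast_card_filter]
  refine sum_le_sum fun t' _ => ?_
  split_ifs
  · simpa using mul_le_one₀ (hc t) (norm_nonneg _) (hc t')
  · simp

end CharacterSums

theorem card_filter_mul_add_eq_le_two {F : Type*} [CommRing F] [IsDomain F] [Fintype F]
    [DecidableEq F] (v t : F) : #{t' | t' * (t' + v) = t * (t + v)} ≤ 2 := by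
  refine (card_le_card fun t' ht' => ?_).trans (card_le_two (a := t) (b := -t - v))
  have : (t' - t) * (t' + t + v) = 0 := by linear_combination (mem_filter.1 ht').2
  rcases mul_eq_zero.1 this with h | h
  · simp [sub_eq_zero.1 h]
  · simp [show t' = -t - v by linear_combination h]

theorem ep_eq_stdAddChar {p : ℕ} [NeZero p] (x : ZMod p) : ep p x = ZMod.stdAddChar x := by
  rw [ZMod.stdAddChar_apply, ZMod.toCircle_apply]
  rfl

noncomputable def omegaSlice (p : ℕ) [NeZero p] (K : ZMod p → ZMod p → ℂ) (u v : ZMod p) : ℝ :=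
  ∑ s, ‖∑ x, K x (s - x) * star (K (x + u) (s - x)) * star (K x (s + v - x)) *
    K (x + u) (s + v - x)‖ ^ 2

theorem bigOmega_eq_sqrt_sum_omegaSlice {p : ℕ} [NeZero p] (K : ZMod p → ZMod p → ℂ) :
    bigOmega p K = √(∑ u, ∑ v, omegaSlice p K u v) := by
  rw [bigOmega, ← Real.sqrt_eq_rpow, sum_comm]
  exact congrArg _ (sum_congr rfl fun u _ => sum_comm)

section OddPrime

variable {p : ℕ} [Fact p.Prime]

theorem ZMod.two_ne_zero_of_ne_two (hp2 : p ≠ 2) : (2 : ZMod p) ≠ 0 :=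
  Ring.two_ne_zero (by rwa [ZMod.ringChar_zmod_n])

theorem ZMod.four_ne_zero_of_ne_two (hp2 : p ≠ 2) : (4 : ZMod p) ≠ 0 := by
  rw [show (4 : ZMod p) = 2 * 2 by ring]
  exact mul_ne_zero (two_ne_zero_of_ne_two hp2) (two_ne_zero_of_ne_two hp2)

theorem Kq_mul_star_mul_star_mul (hp2 : p ≠ 2) (u v s t : ZMod p) :
    Kq p (s - t) t * star (Kq p (s - t + u) t) * star (Kq p (s - t) (t + v)) *
        Kq p (s - t + u) (t + v) =
      (if t = 0 ∨ t + v = 0 then 0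
        else ZMod.stdAddChar ((u ^ 2 - 2 * t * u) * v * (4 * t * (t + v))⁻¹)) *
      ZMod.stdAddChar (2 * u * v * (4 * t * (t + v))⁻¹ * s) := by
  by_cases ht : t = 0
  · simp [Kq, ht]
  by_cases htv : t + v = 0
  · simp [Kq, htv]
  have h4 := ZMod.four_ne_zero_of_ne_two hp2
  simp only [Kq, ht, htv, or_self, if_false, ep_eq_stdAddChar, Complex.star_def,
    ← AddChar.map_neg_eq_conj, ← AddChar.map_add_eq_mul]
  congr 1
  field_simp
  ring

theorem sum_Kq_mul_star_mul_star_mul (hp2 : p ≠ 2) (u v s : ZMod p) :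
    ∑ x, Kq p x (s - x) * star (Kq p (x + u) (s - x)) * star (Kq p x (s + v - x)) *
        Kq p (x + u) (s + v - x) =
      ∑ t, (if t = 0 ∨ t + v = 0 then 0
        else ZMod.stdAddChar ((u ^ 2 - 2 * t * u) * v * (4 * t * (t + v))⁻¹)) *
      ZMod.stdAddChar (2 * u * v * (4 * t * (t + v))⁻¹ * s) := by
  rw [← (Equiv.subLeft s).sum_comp]
  refine sum_congr rfl fun t _ => ?_
  rw [Equiv.subLeft_apply, sub_sub_cancel, show s + v - (s - t) = t + v by ring]
  exact Kq_mul_star_mul_star_mul hp2 u v s t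

theorem omegaSlice_Kq_le (hp2 : p ≠ 2) (u v : ZMod p) :
    omegaSlice p (Kq p) u v ≤
      p * ∑ t : ZMod p, (#{t' | 2 * u * v * (4 * t * (t + v))⁻¹ =
        2 * u * v * (4 * t' * (t' + v))⁻¹} : ℝ) := by
  have hc (t : ZMod p) : ‖if t = 0 ∨ t + v = 0 then 0
      else ZMod.stdAddChar ((u ^ 2 - 2 * t * u) * v * (4 * t * (t + v))⁻¹)‖ ≤ 1 := by
    split_ifs
    · simp
    · exact (AddChar.norm_apply _ _).le
  simp_rw [omegaSlice, sum_Kq_mul_star_mul_star_mul hp2]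
  exact (sum_norm_sq_sum_mul_addChar_le (ZMod.isPrimitive_stdAddChar p) hc
    fun t => 2 * u * v * (4 * t * (t + v))⁻¹).trans_eq (by rw [ZMod.card])

theorem omegaSlice_Kq_le_pow_three (hp2 : p ≠ 2) (u v : ZMod p) :
    omegaSlice p (Kq p) u v ≤ p ^ 3 := by
  refine (omegaSlice_Kq_le hp2 u v).trans ?_
  calc _ ≤ (p : ℝ) * ∑ _t : ZMod p, (p : ℝ) := by
        gcongr
        exact_mod_cast (card_le_univ _).trans_eq (ZMod.card p)
    _ = p ^ 3 := by simp only [sum_const, card_univ, ZMod.card, nsmul_eq_mul]; ring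

theorem omegaSlice_Kq_le_of_ne_zero (hp2 : p ≠ 2) {u v : ZMod p} (hu : u ≠ 0) (hv : v ≠ 0) :
    omegaSlice p (Kq p) u v ≤ 2 * p ^ 2 := by
  have h2uv : (2 * u * v : ZMod p) ≠ 0 :=
    mul_ne_zero (mul_ne_zero (ZMod.two_ne_zero_of_ne_two hp2) hu) hv
  refine (omegaSlice_Kq_le hp2 u v).trans ?_
  calc _ ≤ (p : ℝ) * ∑ _t : ZMod p, (2 : ℝ) := by
        gcongr with t
        have hsub : #{t' | 2 * u * v * (4 * t * (t + v))⁻¹ = 2 * u * v * (4 * t' * (t' + v))⁻¹} ≤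
            #{t' | t' * (t' + v) = t * (t + v)} := by
          refine card_le_card (monotone_filter_right _ fun t' _ h => ?_)
          have := inv_injective (mul_left_cancel₀ h2uv h)
          exact mul_left_cancel₀ (ZMod.four_ne_zero_of_ne_two hp2) (by linear_combination -this)
        exact_mod_cast hsub.trans (card_filter_mul_add_eq_le_two v t)
    _ = 2 * p ^ 2 := by simp only [sum_const, card_univ, ZMod.card, nsmul_eq_mul]; ring

theorem omegaSlice_Kq_le_add_ite (hp2 : p ≠ 2) (u v : ZMod p) :
    omegaSlice p (Kq p) u v ≤
      2 * p ^ 2 + (if u = 0 then (p : ℝ) ^ 3 else 0) + (if v = 0 then (p : ℝ) ^ 3 else 0) := by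
  have hcube := omegaSlice_Kq_le_pow_three hp2 u v
  have hsquare : (0 : ℝ) ≤ 2 * p ^ 2 := by positivity
  by_cases hu : u = 0
  · have hv_ite : (0 : ℝ) ≤ if v = 0 then (p : ℝ) ^ 3 else 0 := by positivity
    rw [if_pos hu]
    linarith
  by_cases hv : v = 0
  · rw [if_neg hu, if_pos hv]
    linarith
  rw [if_neg hu, if_neg hv, add_zero, add_zero]
  exact omegaSlice_Kq_le_of_ne_zero hp2 hu hv

end OddPrime

theorem stmt8 : ∃ c : ℝ, 0 < c ∧ ∀ (p : ℕ) [NeZero p], p.Prime → p ≠ 2 →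
    bigOmega p (Kq p) ≤ c * (p : ℝ) ^ 2 := by
  refine ⟨2, two_pos, fun p _ hp hp2 => ?_⟩
  have := Fact.mk hp
  rw [bigOmega_eq_sqrt_sum_omegaSlice]
  calc √(∑ u, ∑ v, omegaSlice p (Kq p) u v)
      ≤ √(∑ u : ZMod p, ∑ v : ZMod p,
          (2 * p ^ 2 + (if u = 0 then (p : ℝ) ^ 3 else 0) + (if v = 0 then (p : ℝ) ^ 3 else 0))) :=
        Real.sqrt_le_sqrt (sum_le_sum fun u _ => sum_le_sum fun v _ =>
          omegaSlice_Kq_le_add_ite hp2 u v)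
    _ = √((2 * p ^ 2) ^ 2) := by
        congr 1
        simp only [sum_add_distrib, sum_const, card_univ, ZMod.card, nsmul_eq_mul, smul_ite,
          mul_zero, Fintype.sum_ite_eq']
        ring
    _ = 2 * p ^ 2 := Real.sqrt_sq (by positivity)
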